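/- Let (A, φ) be a non-commutative probability space with free cumulants κ_n, and let D ⊔ E = [q] with both D and E nonempty. Suppose Z_1,…,Z_q ∈ A and define κ̃_n(a_1,…,a_n) to equal κ_n(a_1,…,a_n) when all arguments are indexed in D or all are indexed in E, and 0 otherwise. If φ(Z_1⋯Z_q) = Σ_{π ∈ NC(D)} κ_π(Z_i : i ∈ D) · φ_{π̃}(Z_j : j ∈ E), where π̃ is the maximal non-crossing completion of π on E, then φ(Z_1⋯Z_q) = Σ_{σ ∈ NC(q)} κ̃_σ(Z_1,…,Z_q). -/

import Mathlib

/-!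
Expanding every factor of `φ_{π̃}` by the moment–cumulant formula (transported from `[n]` to a
block along its increasing enumeration) turns `φ_{π̃}` into the sum of `κ_ρ` over the
non-crossing partitions `ρ` of `E` refining `π̃`. By maximality of `π̃`, these are exactly the
`ρ ∈ NC(E)` for which `π ∪ ρ` is non-crossing, and `(π, ρ) ↦ π ∪ ρ` is a bijection from such pairs
onto the `σ ∈ NC(q)` all of whose blocks lie in `D` or in `E`, with `κ_π κ_ρ = κ_{π ∪ ρ}`.
-/

open Finset

attribute [local instance] Classical.propDecidable

/-- `P` is a non-crossing partition of the finite set `S ⊆ ℕ`. -/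
def IsNCPartition (S : Finset ℕ) (P : Finset (Finset ℕ)) : Prop :=
  (∀ B ∈ P, B.Nonempty) ∧ (∀ B ∈ P, B ⊆ S) ∧
  (∀ x ∈ S, ∃ B ∈ P, x ∈ B) ∧
  (∀ B ∈ P, ∀ B' ∈ P, B ≠ B' → Disjoint B B') ∧
  (∀ B ∈ P, ∀ B' ∈ P, B ≠ B' →
    ∀ a ∈ B, ∀ b ∈ B', ∀ c ∈ B, ∀ d ∈ B', ¬ (a < b ∧ b < c ∧ c < d))

/-- Refinement order on partitions: every block of `P` is contained in a block of `Q`. -/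
def refines (P Q : Finset (Finset ℕ)) : Prop := ∀ B ∈ P, ∃ C ∈ Q, B ⊆ C

/-- The finite set of all non-crossing partitions of `S`. -/
noncomputable def NCset (S : Finset ℕ) : Finset (Finset (Finset ℕ)) :=
  S.powerset.powerset.filter (IsNCPartition S)

/-- Multiplicative extension of a family of functionals `f n : (Fin n → A) → ℂ` over a
partition `P`: each block contributes `f |C|` evaluated on the entries of `a` indexed by the
block, taken in increasing order. -/
noncomputable def extMul {A : Type*} (f : ∀ n, (Fin n → A) → ℂ)
    (P : Finset (Finset ℕ)) (a : ℕ → A) : ℂ :=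
  ∏ C ∈ P, f C.card (fun i => a ((C.orderIsoOfFin rfl i : ℕ)))

/-- Freeness of a family of subsets with respect to a functional `τ`:
alternating centered products vanish. -/
def IsFreeFamily {E : Type*} [Monoid E] {I : Type*} (τ : E → ℂ) (B : I → Set E) : Prop :=
  ∀ (q : ℕ), 1 ≤ q → ∀ (ind : Fin q → I) (a : Fin q → E),
    (∀ j, a j ∈ B (ind j)) → (∀ j, τ (a j) = 0) →
    (∀ j : Fin q, ∀ h : (j : ℕ) + 1 < q, ind j ≠ ind ⟨(j : ℕ) + 1, h⟩) →
    τ (List.ofFn a).prod = 0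

@[simp]
lemma mem_NCset {S : Finset ℕ} {P : Finset (Finset ℕ)} : P ∈ NCset S ↔ IsNCPartition S P :=
  mem_filter.trans (and_iff_right_of_imp fun h =>
    mem_powerset.2 fun B hB => mem_powerset.2 (h.2.1 B hB))

lemma not_subset_of_disjoint {α : Type*} {B D E : Finset α} (hDE : Disjoint D E)
    (hB : B.Nonempty) (hBD : B ⊆ D) : ¬ B ⊆ E := fun hBE =>
  hB.ne_empty ((disjoint_self_iff_empty B).1 (hDE.mono hBD hBE))

namespace IsNCPartition

variable {S C D E : Finset ℕ} {P T π ρ σ : Finset (Finset ℕ)}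

lemma eq_of_mem_of_mem (hP : IsNCPartition S P) {B B' : Finset ℕ} (hB : B ∈ P) (hB' : B' ∈ P)
    {x : ℕ} (hxB : x ∈ B) (hxB' : x ∈ B') : B = B' := by
  by_contra hne
  exact disjoint_left.1 (hP.2.2.2.1 B hB B' hB' hne) hxB hxB'

lemma subset_of_refines (hT : IsNCPartition S T) (href : refines ρ T) {B C : Finset ℕ}
    (hB : B ∈ ρ) (hC : C ∈ T) {x : ℕ} (hxB : x ∈ B) (hxC : x ∈ C) : B ⊆ C := by
  obtain ⟨C', hC', hBC'⟩ := href B hB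
  rwa [hT.eq_of_mem_of_mem hC hC' hxC (hBC' hxB)]

lemma singleton (hC : C.Nonempty) : IsNCPartition C {C} := by
  refine ⟨?_, ?_, ?_, ?_, ?_⟩ <;> simp_all

lemma filter_subset (hρ : IsNCPartition S ρ) (hC : ∀ x ∈ C, ∃ B ∈ ρ, x ∈ B ∧ B ⊆ C) :
    IsNCPartition C (ρ.filter (· ⊆ C)) := by
  obtain ⟨h1, -, -, h4, h5⟩ := hρ
  refine ⟨fun B hB => h1 B (mem_filter.1 hB).1, fun B hB => (mem_filter.1 hB).2, ?_,
    fun B hB B' hB' => h4 B (mem_filter.1 hB).1 B' (mem_filter.1 hB').1,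
    fun B hB B' hB' => h5 B (mem_filter.1 hB).1 B' (mem_filter.1 hB').1⟩
  intro x hx
  obtain ⟨B, hB, hxB, hBC⟩ := hC x hx
  exact ⟨B, mem_filter.2 ⟨hB, hBC⟩, hxB⟩

lemma of_refines (hT : IsNCPartition S T) (href : refines ρ T)
    (hρ : ∀ C ∈ T, IsNCPartition C (ρ.filter (· ⊆ C))) : IsNCPartition S ρ := by
  have hmem : ∀ {B C}, B ∈ ρ → C ∈ T → B ⊆ C → B ∈ ρ.filter (· ⊆ C) :=
    fun hB _ hBC => mem_filter.2 ⟨hB, hBC⟩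
  refine ⟨fun B hB => ?_, fun B hB => ?_, fun x hx => ?_, fun B hB B' hB' hne => ?_,
    fun B hB B' hB' hne => ?_⟩
  · obtain ⟨C, hC, hBC⟩ := href B hB
    exact (hρ C hC).1 B (hmem hB hC hBC)
  · obtain ⟨C, hC, hBC⟩ := href B hB
    exact hBC.trans (hT.2.1 C hC)
  · obtain ⟨C, hC, hxC⟩ := hT.2.2.1 x hx
    obtain ⟨B, hB, hxB⟩ := (hρ C hC).2.2.1 x hxC
    exact ⟨B, (mem_filter.1 hB).1, hxB⟩
  · obtain ⟨C, hC, hBC⟩ := href B hB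
    obtain ⟨C', hC', hBC'⟩ := href B' hB'
    by_cases hCC' : C = C'
    · subst hCC'
      exact (hρ C hC).2.2.2.1 B (hmem hB hC hBC) B' (hmem hB' hC hBC') hne
    · exact (hT.2.2.2.1 C hC C' hC' hCC').mono hBC hBC'
  · obtain ⟨C, hC, hBC⟩ := href B hB
    obtain ⟨C', hC', hBC'⟩ := href B' hB'
    by_cases hCC' : C = C'
    · subst hCC'
      exact (hρ C hC).2.2.2.2 B (hmem hB hC hBC) B' (hmem hB' hC hBC') hne
    · intro a ha b hb c hc d hd
      exact hT.2.2.2.2 C hC C' hC' hCC' a (hBC ha) b (hBC' hb) c (hBC hc) d (hBC' hd)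

lemma filter_subset_union_left (hDE : Disjoint D E) (hρ : IsNCPartition E ρ) (hC : C ⊆ D) :
    (π ∪ ρ).filter (· ⊆ C) = π.filter (· ⊆ C) := by
  rw [filter_union, filter_false_of_mem fun B hB hBC =>
    not_subset_of_disjoint hDE (hρ.1 B hB) (hBC.trans hC) (hρ.2.1 B hB), union_empty]

lemma union_of_refines (hDE : Disjoint D E) (hπ : IsNCPartition D π) (hρ : IsNCPartition E ρ)
    (hT : IsNCPartition E T) (hπT : IsNCPartition S (π ∪ T)) (href : refines ρ T) :
    IsNCPartition S (π ∪ ρ) := by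
  refine hπT.of_refines (fun B hB => ?_) fun C hC => ?_
  · rcases mem_union.1 hB with hB | hB
    · exact ⟨B, mem_union_left _ hB, subset_rfl⟩
    · obtain ⟨C, hC, hBC⟩ := href B hB
      exact ⟨C, mem_union_right _ hC, hBC⟩
  rcases mem_union.1 hC with hC | hC
  · rw [filter_subset_union_left hDE hρ (hπ.2.1 C hC)]
    convert singleton (hπ.1 C hC)
    ext B
    simp only [mem_filter, mem_singleton]
    refine ⟨fun ⟨hB, hBC⟩ => ?_, fun h => ⟨h ▸ hC, h.subset⟩⟩
    obtain ⟨x, hx⟩ := hπ.1 B hB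
    exact hπ.eq_of_mem_of_mem hB hC hx (hBC hx)
  · rw [union_comm, filter_subset_union_left hDE.symm hπ (hT.2.1 C hC)]
    refine hρ.filter_subset fun x hx => ?_
    obtain ⟨B, hB, hxB⟩ := hρ.2.2.1 x (hT.2.1 C hC hx)
    exact ⟨B, hB, hxB, hT.subset_of_refines href hB hC hxB hx⟩

lemma filter_subset_of_split (hDE : Disjoint D E) (hu : D ∪ E = S) (hσ : IsNCPartition S σ)
    (hsplit : ∀ B ∈ σ, B ⊆ D ∨ B ⊆ E) : IsNCPartition D (σ.filter (· ⊆ D)) := by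
  refine hσ.filter_subset fun x hx => ?_
  obtain ⟨B, hB, hxB⟩ := hσ.2.2.1 x (hu ▸ mem_union_left E hx)
  refine ⟨B, hB, hxB, (hsplit B hB).resolve_right fun hBE => ?_⟩
  exact disjoint_left.1 hDE hx (hBE hxB)

lemma filter_subset_biUnion (hT : IsNCPartition S T) {p : ∀ C ∈ T, Finset (Finset ℕ)}
    (hp : ∀ C hC, IsNCPartition C (p C hC)) (hC : C ∈ T) :
    (T.attach.biUnion fun C => p C.1 C.2).filter (· ⊆ C) = p C hC := by
  ext B
  simp only [mem_filter, mem_biUnion, mem_attach, true_and, Subtype.exists]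
  refine ⟨fun ⟨⟨C', hC', hB⟩, hBC⟩ => ?_, fun hB => ⟨⟨C, hC, hB⟩, (hp C hC).2.1 B hB⟩⟩
  obtain ⟨x, hx⟩ := (hp C' hC').1 B hB
  obtain rfl := hT.eq_of_mem_of_mem hC' hC ((hp C' hC').2.1 B hB hx) (hBC hx)
  exact hB

lemma disjoint (hDE : Disjoint D E) (hπ : IsNCPartition D π) (hρ : IsNCPartition E ρ) :
    Disjoint π ρ :=
  disjoint_left.2 fun B hBπ hBρ =>
    not_subset_of_disjoint hDE (hπ.1 B hBπ) (hπ.2.1 B hBπ) (hρ.2.1 B hBρ)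

end IsNCPartition

lemma sum_NCset_split {M : Type*} [AddCommMonoid M] {S D E : Finset ℕ} (hDE : Disjoint D E)
    (hu : D ∪ E = S) (g : Finset (Finset ℕ) → M) :
    ∑ σ ∈ NCset S with ∀ B ∈ σ, B ⊆ D ∨ B ⊆ E, g σ =
      ∑ π ∈ NCset D, ∑ ρ ∈ NCset E with IsNCPartition S (π ∪ ρ), g (π ∪ ρ) := by
  have hu' : E ∪ D = S := union_comm E D ▸ hu
  have hunion : ∀ σ : Finset (Finset ℕ), (∀ B ∈ σ, B ⊆ D ∨ B ⊆ E) →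
      σ.filter (· ⊆ D) ∪ σ.filter (· ⊆ E) = σ := fun σ h => by
    rw [filter_union_right, filter_true_of_mem h]
  rw [sum_sigma']
  refine sum_nbij' (fun σ => ⟨σ.filter (· ⊆ D), σ.filter (· ⊆ E)⟩) (fun p => p.1 ∪ p.2)
    (fun σ hσ => ?_) (fun p hp => ?_) (fun σ hσ => ?_) (fun p hp => ?_) (fun σ hσ => ?_)
  · obtain ⟨hσ, hsplit⟩ := mem_filter.1 hσ
    rw [mem_NCset] at hσ
    simp only [mem_sigma, mem_filter, mem_NCset, hunion σ hsplit]
    exact ⟨hσ.filter_subset_of_split hDE hu hsplit,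
      hσ.filter_subset_of_split hDE.symm hu' fun B hB => (hsplit B hB).symm, hσ⟩
  · simp only [mem_sigma, mem_filter, mem_NCset] at hp ⊢
    obtain ⟨hπ, hρ, hσ⟩ := hp
    exact ⟨hσ, fun B hB => (mem_union.1 hB).imp (hπ.2.1 B) (hρ.2.1 B)⟩
  · exact hunion σ (mem_filter.1 hσ).2
  · simp only [mem_sigma, mem_filter, mem_NCset] at hp
    obtain ⟨hπ, hρ, -⟩ := hp
    rw [hρ.filter_subset_union_left hDE subset_rfl, filter_true_of_mem hπ.2.1, union_comm,
      hπ.filter_subset_union_left hDE.symm subset_rfl, filter_true_of_mem hρ.2.1]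
  · rw [hunion σ (mem_filter.1 hσ).2]

lemma sum_refines_eq_prod_sum {M : Type*} [CommSemiring M] {S : Finset ℕ}
    {T : Finset (Finset ℕ)} (hT : IsNCPartition S T) (g : Finset ℕ → M) :
    ∑ ρ ∈ NCset S with refines ρ T, ∏ B ∈ ρ, g B = ∏ C ∈ T, ∑ Q ∈ NCset C, ∏ B ∈ Q, g B := by
  rw [prod_sum]
  symm
  refine sum_bij' (fun p _ => T.attach.biUnion fun C => p C.1 C.2)
    (fun ρ _ C _ => ρ.filter (· ⊆ C)) (fun p hp => ?_) (fun ρ hρ => ?_) (fun p hp => ?_)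
    (fun ρ hρ => ?_) (fun p hp => ?_)
  · simp only [mem_pi, mem_NCset] at hp
    simp only [mem_filter, mem_NCset]
    have href : refines (T.attach.biUnion fun C => p C.1 C.2) T := fun B hB => by
      obtain ⟨⟨C, hC⟩, -, hB⟩ := mem_biUnion.1 hB
      exact ⟨C, hC, (hp C hC).2.1 B hB⟩
    refine ⟨hT.of_refines href fun C hC => ?_, href⟩
    rw [hT.filter_subset_biUnion hp hC]
    exact hp C hC
  · obtain ⟨hρ, href⟩ := mem_filter.1 hρ
    simp only [mem_pi, mem_NCset] at hρ ⊢
    refine fun C hC => hρ.filter_subset fun x hx => ?_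
    obtain ⟨B, hB, hxB⟩ := hρ.2.2.1 x (hT.2.1 C hC hx)
    exact ⟨B, hB, hxB, hT.subset_of_refines href hB hC hxB hx⟩
  · simp only [mem_pi, mem_NCset] at hp
    funext C hC
    exact hT.filter_subset_biUnion hp hC
  · ext B
    simp only [mem_biUnion, mem_attach, mem_filter, true_and, Subtype.exists]
    exact ⟨fun ⟨_, _, hB, _⟩ => hB,
      fun hB => ((mem_filter.1 hρ).2 B hB).imp fun C ⟨hC, hBC⟩ => ⟨hC, hB, hBC⟩⟩
  · simp only [mem_pi, mem_NCset] at hp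
    refine (prod_biUnion fun C _ C' _ hne => disjoint_left.2 fun B hB hB' => hne ?_).symm
    obtain ⟨x, hx⟩ := (hp C C.2).1 B hB
    exact Subtype.ext (hT.eq_of_mem_of_mem C.2 C'.2 ((hp C C.2).2.1 B hB hx)
      ((hp C' C'.2).2.1 B hB' hx))

section ImageFilter

variable {α β : Type*} [DecidableEq β] {f : α → β} {s B : Finset α}

lemma mem_image_iff_of_injOn (hf : Set.InjOn f s) (hB : B ⊆ s) {x : α} (hx : x ∈ s) :
    f x ∈ B.image f ↔ x ∈ B := by
  exact_mod_cast hf.mem_image_iff (mod_cast hB) hx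

lemma filter_mem_image_eq (hf : Set.InjOn f s) (hB : B ⊆ s) :
    s.filter (f · ∈ B.image f) = B := by
  ext x
  rw [mem_filter]
  exact ⟨fun ⟨hx, hfx⟩ => (mem_image_iff_of_injOn hf hB hx).1 hfx,
    fun hx => ⟨hB hx, mem_image_of_mem f hx⟩⟩

lemma image_filter_mem_eq {B : Finset β} (hB : B ⊆ s.image f) :
    (s.filter (f · ∈ B)).image f = B := by
  ext y
  simp only [mem_image, mem_filter]
  refine ⟨fun ⟨x, ⟨_, hx⟩, hxy⟩ => hxy ▸ hx, fun hy => ?_⟩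
  obtain ⟨x, hx, rfl⟩ := mem_image.1 (hB hy)
  exact ⟨x, ⟨hx, hy⟩, rfl⟩

end ImageFilter

section StrictMonoImage

variable {e : ℕ → ℕ} {S : Finset ℕ}

lemma isNCPartition_image_iff (he : StrictMonoOn e S) {P : Finset (Finset ℕ)}
    (hP : ∀ B ∈ P, B ⊆ S) :
    IsNCPartition (S.image e) (P.image (image e)) ↔ IsNCPartition S P := by
  have hmem : ∀ B ∈ P, ∀ x ∈ S, e x ∈ B.image e ↔ x ∈ B := fun B hB x hx =>
    mem_image_iff_of_injOn he.injOn (hP B hB) hx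
  have heq : ∀ B ∈ P, ∀ B' ∈ P, B.image e = B'.image e ↔ B = B' := fun B hB B' hB' =>
    image_eq_image_iff_of_injOn he.injOn (hP B hB) (hP B' hB')
  unfold IsNCPartition
  simp only [forall_mem_image, exists_mem_image, image_nonempty, disjoint_left]
  refine and_congr Iff.rfl (and_congr ⟨fun _ => hP, fun _ B hB => image_subset_image (hP B hB)⟩
    (and_congr (forall₂_congr fun x hx => exists_congr fun B =>
        and_congr_right fun hB => hmem B hB x hx)
      (and_congr (forall₂_congr fun B hB => forall₂_congr fun B' hB' => ?_)
        (forall₂_congr fun B hB => forall₂_congr fun B' hB' => ?_))))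
  · rw [Ne, heq B hB B' hB']
    exact imp_congr_right fun _ =>
      forall₂_congr fun x hx => not_congr (hmem B' hB' x (hP B hB hx))
  · rw [Ne, heq B hB B' hB']
    refine imp_congr_right fun _ => forall₂_congr fun a ha => forall₂_congr fun b hb =>
      forall₂_congr fun c hc => forall₂_congr fun d hd => ?_
    rw [he.lt_iff_lt (hP B hB ha) (hP B' hB' hb), he.lt_iff_lt (hP B' hB' hb) (hP B hB hc),
      he.lt_iff_lt (hP B hB hc) (hP B' hB' hd)]

lemma sum_NCset_image {M : Type*} [AddCommMonoid M] (he : StrictMonoOn e S)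
    (G : Finset (Finset ℕ) → M) :
    ∑ Q ∈ NCset (S.image e), G Q = ∑ P ∈ NCset S, G (P.image (image e)) := by
  have hsection : ∀ Q ∈ NCset (S.image e),
      (Q.image fun B => S.filter (e · ∈ B)).image (image e) = Q := fun Q hQ => by
    rw [image_image]
    exact (image_congr fun B hB => image_filter_mem_eq ((mem_NCset.1 hQ).2.1 B hB)).trans
      image_id'
  symm
  refine sum_nbij' (fun P => P.image (image e)) (fun Q => Q.image fun B => S.filter (e · ∈ B))
    (fun P hP => ?_) (fun Q hQ => ?_) (fun P hP => ?_) hsection fun _ _ => rfl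
  · rw [mem_NCset] at hP ⊢
    exact (isNCPartition_image_iff he hP.2.1).2 hP
  · have hsub : ∀ B ∈ Q.image fun B => S.filter (e · ∈ B), B ⊆ S := by
      simp only [forall_mem_image]
      exact fun _ _ => filter_subset _ _
    rw [mem_NCset, ← isNCPartition_image_iff he hsub, hsection Q hQ, ← mem_NCset]
    exact hQ
  · rw [image_image]
    exact (image_congr fun B hB =>
      filter_mem_image_eq he.injOn ((mem_NCset.1 hP).2.1 B hB)).trans image_id'

lemma orderEmbOfFin_image (he : StrictMonoOn e S) {B : Finset ℕ} (hB : B ⊆ S) {k : ℕ}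
    (h : B.card = k) (h' : (B.image e).card = k) (i : Fin k) :
    (B.image e).orderEmbOfFin h' i = e (B.orderEmbOfFin h i) := by
  have hmem := orderEmbOfFin_mem B h
  refine congrFun (orderEmbOfFin_unique h' (fun i => mem_image_of_mem e (hmem i))
    fun i j hij => he (hB (hmem i)) (hB (hmem j)) ((B.orderEmbOfFin h).strictMono hij)).symm i

lemma extMul_image {A : Type*} (f : ∀ n, (Fin n → A) → ℂ) (he : StrictMonoOn e S)
    {P : Finset (Finset ℕ)} (hP : ∀ B ∈ P, B ⊆ S) (Z : ℕ → A) :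
    extMul f (P.image (image e)) Z = extMul f P (Z ∘ e) := by
  unfold extMul
  rw [prod_image fun B hB B' hB' =>
    (image_eq_image_iff_of_injOn he.injOn (hP B hB) (hP B' hB')).1]
  refine prod_congr rfl fun B hB => ?_
  have hcard : (B.image e).card = B.card := card_image_of_injOn (he.injOn.mono (hP B hB))
  congr 1
  refine (Fin.heq_fun_iff hcard).2 fun i => congrArg Z ?_
  simp only [coe_orderIsoOfFin_apply]
  rw [orderEmbOfFin_image he (hP B hB) hcard.symm rfl i]
  exact congrArg e (orderEmbOfFin_eq_orderEmbOfFin_iff.2 rfl)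

end StrictMonoImage

lemma extMul_union {A : Type*} (f : ∀ n, (Fin n → A) → ℂ) {P Q : Finset (Finset ℕ)}
    (hPQ : Disjoint P Q) (a : ℕ → A) : extMul f (P ∪ Q) a = extMul f P a * extMul f Q a :=
  prod_union hPQ

section Moments

variable {A : Type*} [Monoid A]

def IsFreeCumulants (φ : A → ℂ) (κ : ∀ n, (Fin n → A) → ℂ) : Prop :=
  ∀ n : ℕ, 1 ≤ n → ∀ a : ℕ → A,
    φ (((List.range n).map a).prod) = ∑ P ∈ NCset (Finset.range n), extMul κ P a

variable {φ : A → ℂ} {κ : ∀ n, (Fin n → A) → ℂ}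

lemma IsFreeCumulants.moment_block (hmc : IsFreeCumulants φ κ) (Z : ℕ → A) {C : Finset ℕ}
    (hC : C.Nonempty) :
    φ (List.ofFn fun i : Fin C.card => Z (C.orderIsoOfFin rfl i)).prod =
      ∑ Q ∈ NCset C, extMul κ Q Z := by
  let e : ℕ → ℕ := fun i => if h : i < C.card then C.orderEmbOfFin rfl ⟨i, h⟩ else 0
  have he : StrictMonoOn e (range C.card) := fun i hi j hj hij => by
    simp only [coe_range, Set.mem_Iio] at hi hj
    have hlt : (⟨i, hi⟩ : Fin C.card) < ⟨j, hj⟩ := hij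
    simpa [e, hi, hj] using (C.orderEmbOfFin rfl).strictMono hlt
  have himage : (range C.card).image e = C := by
    ext x
    simp only [mem_image, mem_range]
    refine ⟨fun ⟨i, hi, hix⟩ => ?_, fun hx => ?_⟩
    · simp [← hix, e, hi]
    · obtain ⟨i, rfl⟩ : x ∈ Set.range (C.orderEmbOfFin rfl) := by
        rwa [range_orderEmbOfFin]
      exact ⟨i, i.2, by simp [e]⟩
  have hlist : List.ofFn (fun i : Fin C.card => Z (C.orderIsoOfFin rfl i)) =
      (List.range C.card).map (Z ∘ e) := by
    apply List.ext_getElem (by simp)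
    intro i hi _
    have hi' : i < C.card := by simpa using hi
    simp [e, hi']
  rw [hlist, hmc _ (card_pos.2 hC)]
  conv_rhs => rw [← himage, sum_NCset_image he]
  exact sum_congr rfl fun P hP => (extMul_image κ he (mem_NCset.1 hP).2.1 Z).symm

lemma IsFreeCumulants.extMul_moment (hmc : IsFreeCumulants φ κ) (Z : ℕ → A) {E : Finset ℕ}
    {T : Finset (Finset ℕ)} (hT : IsNCPartition E T) :
    extMul (fun n (v : Fin n → A) => φ (List.ofFn v).prod) T Z =
      ∑ ρ ∈ NCset E with refines ρ T, extMul κ ρ Z := by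
  refine (prod_congr rfl fun C hC => hmc.moment_block Z (hT.1 C hC)).trans ?_
  exact (sum_refines_eq_prod_sum hT fun B => κ B.card fun i => Z (B.orderIsoOfFin rfl i)).symm

end Moments

theorem stmt2_general {A : Type*} [Ring A]
    (φ : A → ℂ) (κ : ∀ n, (Fin n → A) → ℂ)
    (hmc : ∀ n : ℕ, 1 ≤ n → ∀ a : ℕ → A,
      φ (((List.range n).map a).prod) = ∑ P ∈ NCset (Finset.range n), extMul κ P a)
    (q : ℕ) (D E : Finset ℕ)
    (hDE : Disjoint D E) (hu : D ∪ E = Finset.range q)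
    (tilde : Finset (Finset ℕ) → Finset (Finset ℕ))
    (htilde : ∀ π ∈ NCset D, IsNCPartition E (tilde π) ∧
      IsNCPartition (Finset.range q) (π ∪ tilde π) ∧
      ∀ ρ, IsNCPartition E ρ → IsNCPartition (Finset.range q) (π ∪ ρ) →
        refines ρ (tilde π))
    (Z : ℕ → A)
    (hfact : φ (((List.range q).map Z).prod)
      = ∑ π ∈ NCset D, extMul κ π Z *
          extMul (fun n (v : Fin n → A) => φ (List.ofFn v).prod) (tilde π) Z) :
    φ (((List.range q).map Z).prod)
      = ∑ σ ∈ NCset (Finset.range q),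
          (if ∀ B ∈ σ, B ⊆ D ∨ B ⊆ E then extMul κ σ Z else 0) := by
  rw [hfact, ← sum_filter, sum_NCset_split hDE hu]
  refine sum_congr rfl fun π hπ => ?_
  obtain ⟨hT, hπT, hmax⟩ := htilde π hπ
  rw [mem_NCset] at hπ
  have hcompat : ∀ ρ ∈ NCset E, refines ρ (tilde π) ↔ IsNCPartition (range q) (π ∪ ρ) :=
    fun ρ hρ => ⟨hπ.union_of_refines hDE (mem_NCset.1 hρ) hT hπT, hmax ρ (mem_NCset.1 hρ)⟩
  rw [IsFreeCumulants.extMul_moment hmc Z hT, mul_sum, filter_congr hcompat]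
  refine sum_congr rfl fun ρ hρ => ?_
  rw [extMul_union κ (hπ.disjoint hDE (mem_NCset.1 (mem_filter.1 hρ).1))]

/-- Re-indexing the factorized mixed moment as a sum of modified cumulants
over all non-crossing partitions of [q]. -/
theorem stmt2 {A : Type*} [Ring A] [Algebra ℂ A]
    (φ : A → ℂ) (κ : ∀ n, (Fin n → A) → ℂ)
    (hmc : ∀ n : ℕ, 1 ≤ n → ∀ a : ℕ → A,
      φ (((List.range n).map a).prod) = ∑ P ∈ NCset (Finset.range n), extMul κ P a)
    (q : ℕ) (hq : 1 ≤ q) (D E : Finset ℕ)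
    (hDE : Disjoint D E) (hu : D ∪ E = Finset.range q)
    (hD : D.Nonempty) (hE : E.Nonempty)
    (tilde : Finset (Finset ℕ) → Finset (Finset ℕ))
    (htilde : ∀ π ∈ NCset D, IsNCPartition E (tilde π) ∧
      IsNCPartition (Finset.range q) (π ∪ tilde π) ∧
      ∀ ρ, IsNCPartition E ρ → IsNCPartition (Finset.range q) (π ∪ ρ) →
        refines ρ (tilde π))
    (Z : ℕ → A)
    (hfact : φ (((List.range q).map Z).prod)
      = ∑ π ∈ NCset D, extMul κ π Z *
          extMul (fun n (v : Fin n → A) => φ (List.ofFn v).prod) (tilde π) Z) :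
    φ (((List.range q).map Z).prod)
      = ∑ σ ∈ NCset (Finset.range q),
          (if ∀ B ∈ σ, B ⊆ D ∨ B ⊆ E then extMul κ σ Z else 0) :=
  stmt2_general φ κ hmc q D E hDE hu tilde htilde Z hfact
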